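/- Let p ≥ 5 be prime, H an order-p subgroup of Z_p², A ⊆ Z_p² with |A| = 2p+1, coset intersections A_i with |A_0| ≥ |A_i| for all i, |A_0| ≤ (p+1)/2, and let m be the number of nonzero i with A_i ≠ ∅. If m ≤ (p-1)/2 and |A +̂ A| ≤ 4p-1, then |A_0|(m+1) - |A| ≤ 2. -/
import Mathlib

open Finset Polynomial Lagrange
open scoped Pointwise
/-- The restricted sumset `A +̂ B = {a + b : a ∈ A, b ∈ B, a ≠ b}`. -/
def hadd {G : Type*} [AddCommGroup G] [DecidableEq G] (A B : Finset G) : Finset G :=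
  ((A ×ˢ B).filter fun x => x.1 ≠ x.2).image fun x => x.1 + x.2

lemma mem_hadd {G : Type*} [AddCommGroup G] [DecidableEq G] {A B : Finset G} {x : G} :
    x ∈ hadd A B ↔ ∃ a ∈ A, ∃ b ∈ B, a ≠ b ∧ a + b = x := by
  simp only [hadd, mem_image, mem_filter, mem_product, Prod.exists]
  constructor
  · rintro ⟨a, b, ⟨⟨ha, hb⟩, hne⟩, rfl⟩; exact ⟨a, ha, b, hb, hne, rfl⟩
  · rintro ⟨a, ha, b, hb, hne, rfl⟩; exact ⟨a, b, ⟨⟨ha, hb⟩, hne⟩, rfl⟩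

variable {F : Type*} [Field F] [DecidableEq F]

lemma psum (S : Finset F) (i : ℕ) (hi : i < S.card) :
    ∑ α ∈ S, α ^ i * nodalWeight S id α = if i = S.card - 1 then 1 else 0 := by
  have hinj : Set.InjOn id (S : Set F) := Function.injective_id.injOn
  have hfun : (X ^ i : F[X]) = interpolate S id (fun α => (X ^ i : F[X]).eval (id α)) := by
    refine eq_interpolate hinj ?_
    simpa [degree_X_pow] using (by exact_mod_cast hi : (i : WithBot ℕ) < S.card)
  have h := congrArg (fun q : F[X] => q.coeff (S.card - 1)) hfun
  simp only [interpolate_apply, finset_sum_coeff] at h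
  rw [coeff_X_pow] at h
  calc ∑ α ∈ S, α ^ i * nodalWeight S id α
      = ∑ α ∈ S, (C ((X ^ i : F[X]).eval (id α)) * Lagrange.basis S id α).coeff (S.card - 1) := by
        refine sum_congr rfl fun α hα => ?_
        rw [coeff_C_mul, basis_eq_prod_sub_inv_mul_nodal_div hα, ← nodal_erase_eq_nodal_div hα,
          coeff_C_mul]
        have hdeg : (nodal (S.erase α) id).natDegree = (S.erase α).card := natDegree_nodal
        have : (nodal (S.erase α) id).coeff (S.card - 1) = 1 := by
          rw [card_erase_of_mem hα] at hdeg
          rw [← hdeg]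
          exact (nodal_monic).coeff_natDegree
        simp [this, mul_comm]
    _ = if i = S.card - 1 then 1 else 0 := by rw [← h]; simp [eq_comm]

lemma anr {p : ℕ} [Fact p.Prime] (A B : Finset (ZMod p))
    (hB2 : 2 ≤ B.card) (hab : A.card = B.card + 1) (hp : A.card + B.card - 2 ≤ p) :
    A.card + B.card - 2 ≤ (hadd A B).card := by
  by_contra hcon
  push_neg at hcon
  set a := A.card with ha
  set b := B.card with hb
  set d := a + b - 3 with hd
  have hb1 : 2 ≤ b := hB2
  have ha3 : 3 ≤ a := by omega
  have hd1 : d + 1 = a + b - 2 := by omega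
  have hcard : (hadd A B).card ≤ d := by omega
  have hdp : d ≤ Fintype.card (ZMod p) := by rw [ZMod.card]; omega
  obtain ⟨Cs, hCsub, hCcard⟩ := Finset.exists_superset_card_eq hcard hdp
  set Q : (ZMod p)[X] := nodal Cs id with hQ
  have hQdeg : Q.natDegree = d := by rw [hQ, natDegree_nodal, hCcard]
  set WA := nodalWeight A id with hWA
  set WB := nodalWeight B id with hWB
  set Λ := ∑ α ∈ A, ∑ β ∈ B, (α - β) * Q.eval (α + β) * (WA α * WB β) with hΛ
  -- Λ vanishes since Q vanishes on the restricted sumset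
  have hzero : Λ = 0 := by
    refine sum_eq_zero fun α hα => sum_eq_zero fun β hβ => ?_
    by_cases hne : α = β
    · simp [hne]
    · have hmem : α + β ∈ Cs := hCsub (mem_hadd.mpr ⟨α, hα, β, hβ, hne, rfl⟩)
      have : Q.eval (α + β) = 0 := by
        rw [hQ, eval_nodal]
        exact prod_eq_zero hmem (by simp)
      simp [this]
  set PA : ℕ → ZMod p := fun i => ∑ α ∈ A, α ^ i * WA α with hPAdef
  set PB : ℕ → ZMod p := fun i => ∑ β ∈ B, β ^ i * WB β with hPBdef
  have hPA : ∀ i, i < a → PA i = if i = a - 1 then 1 else 0 := fun i hi => psum A i hi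
  have hPB : ∀ i, i < b → PB i = if i = b - 1 then 1 else 0 := fun i hi => psum B i hi
  have hD : ∀ i j : ℕ, i + j ≤ d + 1 → ¬(i = a - 1 ∧ j = b - 1) → PA i * PB j = 0 := by
    intro i j hij hne
    rcases (show i ≤ a - 2 ∨ j ≤ b - 2 by omega) with h | h
    · rw [hPA i (by omega), if_neg (by omega), zero_mul]
    · rw [hPB j (by omega), if_neg (by omega), mul_zero]
  set G : ℕ → ZMod p := fun k => ∑ α ∈ A, ∑ β ∈ B, (α - β) * (α + β) ^ k * (WA α * WB β)
    with hG
  have hGsep : ∀ k, G k = ∑ j ∈ range (k + 1), (Nat.choose k j : ZMod p) *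
      (PA (j + 1) * PB (k - j) - PA j * PB (k - j + 1)) := by
    intro k
    have hpoint : ∀ α β : ZMod p, (α - β) * (α + β) ^ k * (WA α * WB β) =
        ∑ j ∈ range (k + 1), (Nat.choose k j : ZMod p) *
          ((α ^ (j + 1) * WA α) * (β ^ (k - j) * WB β)
            - (α ^ j * WA α) * (β ^ (k - j + 1) * WB β)) := by
      intro α β
      rw [add_pow, Finset.mul_sum, Finset.sum_mul]
      refine sum_congr rfl fun j hj => ?_
      ring
    calc G k = ∑ α ∈ A, ∑ β ∈ B, ∑ j ∈ range (k + 1), (Nat.choose k j : ZMod p) *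
          ((α ^ (j + 1) * WA α) * (β ^ (k - j) * WB β)
            - (α ^ j * WA α) * (β ^ (k - j + 1) * WB β)) :=
        sum_congr rfl fun α _ => sum_congr rfl fun β _ => hpoint α β
      _ = ∑ α ∈ A, ∑ j ∈ range (k + 1), ∑ β ∈ B, (Nat.choose k j : ZMod p) *
          ((α ^ (j + 1) * WA α) * (β ^ (k - j) * WB β)
            - (α ^ j * WA α) * (β ^ (k - j + 1) * WB β)) :=
        sum_congr rfl fun α _ => Finset.sum_comm
      _ = ∑ j ∈ range (k + 1), ∑ α ∈ A, ∑ β ∈ B, (Nat.choose k j : ZMod p) *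
          ((α ^ (j + 1) * WA α) * (β ^ (k - j) * WB β)
            - (α ^ j * WA α) * (β ^ (k - j + 1) * WB β)) := Finset.sum_comm
      _ = ∑ j ∈ range (k + 1), (Nat.choose k j : ZMod p) *
          (PA (j + 1) * PB (k - j) - PA j * PB (k - j + 1)) := by
        refine sum_congr rfl fun j _ => ?_
        rw [hPAdef, hPBdef]
        simp only
        rw [Finset.sum_mul_sum, Finset.sum_mul_sum, ← Finset.sum_sub_distrib, Finset.mul_sum]
        refine sum_congr rfl fun α _ => ?_
        rw [← Finset.sum_sub_distrib, Finset.mul_sum]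
  have hGlt : ∀ k, k < d → G k = 0 := by
    intro k hk
    rw [hGsep]
    refine sum_eq_zero fun j hj => ?_
    rw [mem_range] at hj
    rw [hD (j + 1) (k - j) (by omega) (by omega), hD j (k - j + 1) (by omega) (by omega),
      sub_zero, mul_zero]
  have hGd : G d = (Nat.choose d (a - 2) : ZMod p) - (Nat.choose d (a - 1) : ZMod p) := by
    rw [hGsep]
    have hstep : ∀ j ∈ range (d + 1), (Nat.choose d j : ZMod p) *
        (PA (j + 1) * PB (d - j) - PA j * PB (d - j + 1)) =
        (if j = a - 2 then (Nat.choose d j : ZMod p) else 0)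
          - (if j = a - 1 then (Nat.choose d j : ZMod p) else 0) := by
      intro j hj
      rw [mem_range] at hj
      have h1 : PA (j + 1) * PB (d - j) = if j = a - 2 then 1 else 0 := by
        by_cases hja : j = a - 2
        · subst hja
          rw [hPA (a - 2 + 1) (by omega), hPB (d - (a - 2)) (by omega),
            if_pos (by omega), if_pos (by omega), one_mul]
          simp
        · exact if_neg hja ▸ hD (j + 1) (d - j) (by omega) (by omega)
      have h2 : PA j * PB (d - j + 1) = if j = a - 1 then 1 else 0 := by
        by_cases hja : j = a - 1
        · subst hja
          rw [hPA (a - 1) (by omega), hPB (d - (a - 1) + 1) (by omega),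
            if_pos (by omega), if_pos (by omega), one_mul]
        · exact if_neg hja ▸ hD j (d - j + 1) (by omega) (by omega)
      rw [h1, h2]
      simp [mul_sub, mul_ite]
    rw [sum_congr rfl hstep, Finset.sum_sub_distrib, Finset.sum_ite_eq' (range (d + 1)),
      Finset.sum_ite_eq' (range (d + 1)), if_pos (mem_range.mpr (by omega)),
      if_pos (mem_range.mpr (by omega))]
  have hΛG : Λ = G d := by
    have heval : ∀ x : ZMod p, Q.eval x = ∑ k ∈ range (d + 1), Q.coeff k * x ^ k := by
      intro x
      rw [eval_eq_sum_range, hQdeg]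
    have step1 : Λ = ∑ α ∈ A, ∑ β ∈ B, ∑ k ∈ range (d + 1),
        Q.coeff k * ((α - β) * (α + β) ^ k * (WA α * WB β)) := by
      rw [hΛ]
      refine sum_congr rfl fun α _ => sum_congr rfl fun β _ => ?_
      rw [heval, Finset.mul_sum, Finset.sum_mul]
      refine sum_congr rfl fun k _ => by ring
    have step2 : Λ = ∑ k ∈ range (d + 1), ∑ α ∈ A, ∑ β ∈ B,
        Q.coeff k * ((α - β) * (α + β) ^ k * (WA α * WB β)) := by
      rw [step1]
      rw [show (∑ α ∈ A, ∑ β ∈ B, ∑ k ∈ range (d + 1),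
        Q.coeff k * ((α - β) * (α + β) ^ k * (WA α * WB β)))
        = ∑ α ∈ A, ∑ k ∈ range (d + 1), ∑ β ∈ B,
        Q.coeff k * ((α - β) * (α + β) ^ k * (WA α * WB β)) from
          sum_congr rfl fun α _ => Finset.sum_comm]
      exact Finset.sum_comm
    have step3 : Λ = ∑ k ∈ range (d + 1), Q.coeff k * G k := by
      rw [step2]
      refine sum_congr rfl fun k _ => ?_
      rw [hG]
      simp only
      rw [Finset.mul_sum]
      exact sum_congr rfl fun α _ => (Finset.mul_sum _ _ _).symm
    rw [step3, Finset.sum_range_succ]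
    have hcoeffd : Q.coeff d = 1 := by
      have := (nodal_monic (s := Cs) (v := (id : ZMod p → ZMod p))).coeff_natDegree
      rwa [← hQ, hQdeg] at this
    have hrest : ∑ k ∈ range d, Q.coeff k * G k = 0 :=
      sum_eq_zero fun k hk => by rw [hGlt k (mem_range.mp hk), mul_zero]
    rw [hrest, hcoeffd, zero_add, one_mul]
  -- the coefficient is nonzero
  have hdvd : ¬ (p : ℕ) ∣ Nat.choose d (a - 2) := by
    intro hdvd
    have h1 : Nat.choose d (a - 2) ∣ Nat.factorial d :=
      ⟨Nat.factorial (a - 2) * Nat.factorial (d - (a - 2)),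
        by rw [← mul_assoc]; exact (Nat.choose_mul_factorial_mul_factorial (by omega)).symm⟩
    have h2 : (p : ℕ) ∣ Nat.factorial d := hdvd.trans h1
    have := (Nat.Prime.dvd_factorial (Fact.out)).mp h2
    omega
  have hchoose : Nat.choose d (a - 1) * (a - 1) = Nat.choose d (a - 2) * (b - 1) := by
    have := Nat.choose_succ_right_eq d (a - 2)
    have h1 : a - 2 + 1 = a - 1 := by omega
    have h2 : d - (a - 2) = b - 1 := by omega
    rw [h1, h2] at this
    exact this
  have hne : G d ≠ 0 := by
    rw [hGd]
    intro hG0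
    have hx : (Nat.choose d (a - 2) : ZMod p) = (Nat.choose d (a - 1) : ZMod p) := by
      rwa [sub_eq_zero] at hG0
    have hcast := congrArg (fun n : ℕ => (n : ZMod p)) hchoose
    simp only [Nat.cast_mul] at hcast
    rw [← hx] at hcast
    have ha' : ((a - 1 : ℕ) : ZMod p) = ((b : ℕ) : ZMod p) := by
      rw [show a - 1 = b by omega]
    have hb' : ((b - 1 : ℕ) : ZMod p) = ((b : ℕ) : ZMod p) - 1 := by
      rw [Nat.cast_sub (by omega : 1 ≤ b), Nat.cast_one]
    rw [ha', hb'] at hcast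
    have hzero2 : (Nat.choose d (a - 2) : ZMod p) = 0 := by linear_combination hcast
    exact hdvd ((ZMod.natCast_eq_zero_iff _ _).mp hzero2)
  rw [hzero] at hΛG
  exact hne hΛG.symm

lemma ddsh {p : ℕ} [Fact p.Prime] (Xs : Finset (ZMod p)) (h3 : 3 ≤ Xs.card)
    (hp : 2 * Xs.card - 3 ≤ p) : 2 * Xs.card - 3 ≤ (hadd Xs Xs).card := by
  obtain ⟨x, hx⟩ := Finset.card_pos.mp (show 0 < Xs.card by omega)
  have hB : (Xs.erase x).card = Xs.card - 1 := card_erase_of_mem hx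
  have h := anr Xs (Xs.erase x) (by omega) (by omega) (by omega)
  have hsub : hadd Xs (Xs.erase x) ⊆ hadd Xs Xs := by
    intro y hy
    rw [mem_hadd] at hy ⊢
    obtain ⟨c, hc, b, hb, hne, rfl⟩ := hy
    exact ⟨c, hc, b, Finset.mem_of_mem_erase hb, hne, rfl⟩
  calc 2 * Xs.card - 3 = Xs.card + (Xs.erase x).card - 2 := by omega
    _ ≤ (hadd Xs (Xs.erase x)).card := h
    _ ≤ (hadd Xs Xs).card := card_le_card hsub

lemma exists_psi {p : ℕ} [Fact p.Prime] (φ : (ZMod p × ZMod p) →+ ZMod p)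
    (hφ : Function.Surjective φ) :
    ∃ ψ : (ZMod p × ZMod p) →+ ZMod p, ∀ x, φ x = 0 → ψ x = 0 → x = 0 := by
  have hmul : ∀ (c : ZMod p) (x : ZMod p × ZMod p), φ (c * x.1, c * x.2) = c * φ x := by
    intro c x
    have h1 : (c * x.1, c * x.2) = c.val • x := by
      have : c.val • x = (c.val • x.1, c.val • x.2) := rfl
      rw [this, nsmul_eq_mul, nsmul_eq_mul, ZMod.natCast_zmod_val]
    rw [h1, map_nsmul, nsmul_eq_mul, ZMod.natCast_zmod_val]
  by_cases h1 : ∀ x, φ x = 0 → x.1 = 0 → x = 0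
  · exact ⟨AddMonoidHom.fst _ _, fun x hx h => h1 x hx h⟩
  by_cases h2 : ∀ x, φ x = 0 → x.2 = 0 → x = 0
  · exact ⟨AddMonoidHom.snd _ _, fun x hx h => h2 x hx h⟩
  exfalso
  push_neg at h1 h2
  obtain ⟨u, hu0, hu1, hune⟩ := h1
  obtain ⟨v, hv0, hv2, hvne⟩ := h2
  have hu2 : u.2 ≠ 0 := fun h => hune (Prod.ext hu1 h)
  have hv1 : v.1 ≠ 0 := fun h => hvne (Prod.ext h hv2)
  obtain ⟨y, hy⟩ := hφ 1
  have hxdec : y = ((y.1 * v.1⁻¹) * v.1, (y.1 * v.1⁻¹) * v.2)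
      + ((y.2 * u.2⁻¹) * u.1, (y.2 * u.2⁻¹) * u.2) := by
    have c1 : y.1 * v.1⁻¹ * v.1 = y.1 := by rw [mul_assoc, inv_mul_cancel₀ hv1, mul_one]
    have c2 : y.2 * u.2⁻¹ * u.2 = y.2 := by rw [mul_assoc, inv_mul_cancel₀ hu2, mul_one]
    rw [Prod.ext_iff]
    constructor <;> simp [hu1, hv2, c1, c2]
  have h0 : φ y = 0 := by
    rw [hxdec, map_add, hmul (y.1 * v.1⁻¹) v, hmul (y.2 * u.2⁻¹) u, hv0, hu0,
      mul_zero, mul_zero, add_zero]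
  exact one_ne_zero (hy.symm.trans h0)

/-- Lemma 2.15 (Case 1B). With `H` an order-`p` subgroup of `ℤ_p²` given as the kernel
of a surjective homomorphism `φ`, coset pieces `A_i = A ∩ φ⁻¹(i)`, `|A| = 2p+1`,
`|A_0|` maximal, `|A_0| ≤ (p+1)/2`, and `m` the number of nonzero `i` with `A_i ≠ ∅`:
if `m ≤ (p-1)/2` and `|A +̂ A| ≤ 4p - 1` then `|A_0|(m+1) - |A| ≤ 2`. -/
theorem lemma_2_15 {p : ℕ} [Fact p.Prime] (h5 : 5 ≤ p)
    (φ : (ZMod p × ZMod p) →+ ZMod p) (hφ : Function.Surjective φ)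
    (A : Finset (ZMod p × ZMod p)) (hA : A.card = 2 * p + 1)
    (hmax : ∀ i : ZMod p, (A.filter fun a => φ a = i).card ≤
        (A.filter fun a => φ a = 0).card)
    (hA0 : 2 * (A.filter fun a => φ a = 0).card ≤ p + 1)
    (m : ℕ)
    (hm : m = (Finset.univ.filter fun i : ZMod p =>
        i ≠ 0 ∧ (A.filter fun a => φ a = i).Nonempty).card)
    (hm2 : 2 * m ≤ p - 1)
    (hsmall : (hadd A A).card ≤ 4 * p - 1) :
    ((A.filter fun a => φ a = 0).card : ℤ) * (m + 1) - (A.card : ℤ) ≤ 2 := by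
  by_contra hgoal
  push_neg at hgoal
  obtain ⟨ψ, hKer⟩ := exists_psi φ hφ
  have hKinj : ∀ x y : ZMod p × ZMod p, φ x = φ y → ψ x = ψ y → x = y := by
    intro x y hxy hpsi
    have := hKer (x - y) (by rw [map_sub, hxy, sub_self]) (by rw [map_sub, hpsi, sub_self])
    exact sub_eq_zero.mp this
  set n : ZMod p → ℕ := fun γ => (A.filter fun a => φ a = γ).card with hn
  set k : ℕ := (A.filter fun a => φ a = 0).card with hk
  -- from negated goal: k * (m + 1) ≥ 2p + 4
  have hKineq : 2 * p + 4 ≤ k * (m + 1) := by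
    rw [hA] at hgoal
    have : ((2 * p + 4 : ℕ) : ℤ) ≤ ((k * (m + 1) : ℕ) : ℤ) := by
      push_cast at hgoal ⊢
      linarith
    exact_mod_cast this
  have hk2 : 2 * k ≤ p + 1 := hA0
  have hm2' : 2 * (m + 1) ≤ p + 1 := by omega
  have hm3 : 3 ≤ m + 1 := by
    by_contra h
    have h' : m + 1 ≤ 2 := by omega
    have := Nat.mul_le_mul_left k h'
    omega
  have hk3 : 3 ≤ k := by
    by_contra h
    have h' : k ≤ 2 := by omega
    have := Nat.mul_le_mul_right (m + 1) h'
    omega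
  set S : Finset (ZMod p) := Finset.univ.filter (fun i : ZMod p =>
      i ≠ 0 ∧ (A.filter fun a => φ a = i).Nonempty) with hS
  have hmS : m = S.card := hm
  have hS0 : (0 : ZMod p) ∉ S := by simp [hS]
  set T : Finset (ZMod p) := insert 0 S with hT
  have hTcard : T.card = m + 1 := by rw [hT, card_insert_of_notMem hS0, hmS]
  -- fiber decomposition of A
  have hfibA : A.card = ∑ γ ∈ Finset.univ, n γ :=
    card_eq_sum_card_fiberwise (fun x _ => mem_univ (φ x))
  have hzero : ∀ γ ∈ Finset.univ, γ ∉ T → n γ = 0 := by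
    intro γ _ hγ
    rw [hT, mem_insert] at hγ
    push_neg at hγ
    obtain ⟨hγ0, hγS⟩ := hγ
    have hne : ¬ (A.filter fun a => φ a = γ).Nonempty := by
      intro hne
      exact hγS (by simp [hS, hγ0, hne])
    simpa [hn] using Finset.card_eq_zero.mpr (not_nonempty_iff_eq_empty.mp hne)
  have hsumT : ∑ γ ∈ Finset.univ, n γ = k + ∑ γ ∈ S, n γ := by
    rw [← Finset.sum_subset (subset_univ T) hzero, hT, sum_insert hS0]
  have e1 : k + ∑ γ ∈ S, n γ = 2 * p + 1 := by rw [← hsumT, ← hfibA, hA]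
  -- the restricted sumset and its fibers
  set U : Finset (ZMod p × ZMod p) := hadd A A with hU
  set Uf : ZMod p → Finset (ZMod p × ZMod p) := fun γ => U.filter (fun x => φ x = γ) with hUf
  have hfibU : U.card = ∑ γ ∈ Finset.univ, (Uf γ).card :=
    card_eq_sum_card_fiberwise (fun x _ => mem_univ (φ x))
  -- images under ψ
  have himg_card : ∀ γ : ZMod p, ((A.filter fun a => φ a = γ).image ψ).card = n γ := by
    intro γ
    refine card_image_of_injOn fun x hx y hy hxy => ?_
    rw [coe_filter] at hx hy
    exact hKinj x y (hx.2.trans hy.2.symm) hxy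
  -- bound on the zero fiber via DdSH
  have hAnon : ∀ γ ∈ T, (A.filter fun a => φ a = γ).Nonempty := by
    intro γ hγ
    rw [hT, mem_insert] at hγ
    rcases hγ with rfl | hγ
    · exact card_pos.mp (by omega)
    · rw [hS, mem_filter] at hγ
      exact hγ.2.2
  have hb0 : 2 * k - 3 ≤ (Uf 0).card := by
    set B0 := (A.filter fun a => φ a = 0).image ψ with hB0
    have hB0card : B0.card = k := himg_card 0
    have hsub : hadd B0 B0 ⊆ (Uf 0).image ψ := by
      intro z hz
      rw [mem_hadd] at hz
      obtain ⟨x, hx, y, hy, hne, rfl⟩ := hz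
      rw [hB0, mem_image] at hx hy
      obtain ⟨a, ha, rfl⟩ := hx
      obtain ⟨b, hb, rfl⟩ := hy
      have hab : a ≠ b := fun h => hne (by rw [h])
      have ha' := mem_filter.mp ha
      have hb' := mem_filter.mp hb
      have hmem : a + b ∈ Uf 0 := by
        rw [hUf, mem_filter]
        exact ⟨mem_hadd.mpr ⟨a, ha'.1, b, hb'.1, hab, rfl⟩,
          by rw [map_add, ha'.2, hb'.2, add_zero]⟩
      exact mem_image.mpr ⟨a + b, hmem, map_add ψ a b⟩
    calc 2 * k - 3 = 2 * B0.card - 3 := by rw [hB0card]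
      _ ≤ (hadd B0 B0).card := ddsh B0 (by omega) (by omega)
      _ ≤ ((Uf 0).image ψ).card := card_le_card hsub
      _ ≤ (Uf 0).card := card_image_le
  -- bound on the S fibers via Cauchy-Davenport
  have hbS : ∀ γ ∈ S, k - 1 + n γ ≤ (Uf γ).card := by
    intro γ hγ
    have hγ0 : γ ≠ 0 := ((mem_filter.mp hγ).2).1
    set B0 := (A.filter fun a => φ a = 0).image ψ with hB0
    set Bγ := (A.filter fun a => φ a = γ).image ψ with hBγ
    have hB0card : B0.card = k := himg_card 0
    have hBγcard : Bγ.card = n γ := himg_card γ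
    have hnon0 : B0.Nonempty := by
      rw [← card_pos, hB0card]; omega
    have hnonγ : Bγ.Nonempty :=
      (hAnon γ (by rw [hT]; exact mem_insert_of_mem hγ)).image ψ
    have hCD := ZMod.cauchy_davenport (Fact.out) hnon0 hnonγ
    rw [hB0card, hBγcard] at hCD
    have hnγk : n γ ≤ k := hmax γ
    have hmin : min p (k + n γ - 1) = k + n γ - 1 := min_eq_right (by omega)
    rw [hmin] at hCD
    have hsub : B0 + Bγ ⊆ (Uf γ).image ψ := by
      intro z hz
      rw [Finset.mem_add] at hz
      obtain ⟨x, hx, y, hy, rfl⟩ := hz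
      rw [hB0, mem_image] at hx
      rw [hBγ, mem_image] at hy
      obtain ⟨a, ha, rfl⟩ := hx
      obtain ⟨b, hb, rfl⟩ := hy
      have ha' := mem_filter.mp ha
      have hb' := mem_filter.mp hb
      have hab : a ≠ b := fun h => hγ0 (by rw [← hb'.2, ← h, ha'.2])
      have hmem : a + b ∈ Uf γ := by
        rw [hUf, mem_filter]
        exact ⟨mem_hadd.mpr ⟨a, ha'.1, b, hb'.1, hab, rfl⟩,
          by rw [map_add, ha'.2, hb'.2, zero_add]⟩
      exact mem_image.mpr ⟨a + b, hmem, map_add ψ a b⟩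
    calc k - 1 + n γ = k + n γ - 1 := by omega
      _ ≤ (B0 + Bγ).card := hCD
      _ ≤ ((Uf γ).image ψ).card := card_le_card hsub
      _ ≤ (Uf γ).card := card_image_le
  -- extra fibers from DdSH on T
  set E : Finset (ZMod p) := (hadd T T) \ T with hE
  have hEcard : m - 2 ≤ E.card := by
    have hTT := ddsh T (by omega) (by omega)
    rw [hTcard] at hTT
    have := Finset.le_card_sdiff T (hadd T T)
    rw [← hE] at this
    omega
  have hbE : ∀ γ ∈ E, 1 ≤ (Uf γ).card := by
    intro γ hγ
    rw [hE, mem_sdiff] at hγ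
    obtain ⟨hγTT, _⟩ := hγ
    rw [mem_hadd] at hγTT
    obtain ⟨i, hi, j, hj, hij, rfl⟩ := hγTT
    obtain ⟨a, ha⟩ := hAnon i hi
    obtain ⟨b, hb⟩ := hAnon j hj
    have ha' := mem_filter.mp ha
    have hb' := mem_filter.mp hb
    have hab : a ≠ b := fun h => hij (by rw [← ha'.2, h, hb'.2])
    refine card_pos.mpr ⟨a + b, ?_⟩
    rw [hUf, mem_filter]
    exact ⟨mem_hadd.mpr ⟨a, ha'.1, b, hb'.1, hab, rfl⟩, by rw [map_add, ha'.2, hb'.2]⟩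
  -- assemble
  have hdisj : Disjoint T E := by
    rw [hE]
    exact Finset.disjoint_sdiff
  have hsplit : ∑ γ ∈ T ∪ E, (Uf γ).card ≤ U.card := by
    rw [hfibU]
    exact Finset.sum_le_sum_of_subset (subset_univ _)
  have hTsum : ∑ γ ∈ T, (Uf γ).card = (Uf 0).card + ∑ γ ∈ S, (Uf γ).card := by
    rw [hT, sum_insert hS0]
  have hunion : ∑ γ ∈ T ∪ E, (Uf γ).card
      = ∑ γ ∈ T, (Uf γ).card + ∑ γ ∈ E, (Uf γ).card := sum_union hdisj
  have hSsum : ∑ γ ∈ S, (k - 1 + n γ) ≤ ∑ γ ∈ S, (Uf γ).card := Finset.sum_le_sum hbS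
  have hSsum' : ∑ γ ∈ S, (k - 1 + n γ) = m * (k - 1) + ∑ γ ∈ S, n γ := by
    rw [Finset.sum_add_distrib, Finset.sum_const, hmS, smul_eq_mul]
  have hEsum : E.card ≤ ∑ γ ∈ E, (Uf γ).card := by
    calc E.card = ∑ _γ ∈ E, 1 := by rw [Finset.sum_const, smul_eq_mul, mul_one]
      _ ≤ ∑ γ ∈ E, (Uf γ).card := Finset.sum_le_sum hbE
  -- final arithmetic
  have q1 : m * (k - 1) + m * 1 = m * k := by
    rw [← Nat.mul_add]
    congr 1
    omega
  have q2 : k * (m + 1) = k * m + k := by ring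
  have q3 : m * k = k * m := Nat.mul_comm m k
  have hUb : U.card ≤ 4 * p - 1 := hsmall
  omega
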